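/- The map κ_T⁺ : 𝕊_T⁺ → Sp(d,ℝ) sending (a,s,t₁,t̃) to the block matrix [[a^{−1/2}T_s^{−T}, 0],[a^{−1/2}σ(t₁,t̃)T_s^{−T}, a^{1/2}T_s]] is an injective group homomorphism from the connected Toeplitz shearlet group into the symplectic group. -/

import Mathlib

/-!
`κ_T⁺(a, s, t)` factors as `lowerShear (σ t) * contragredientDiag (a^{1/2} T_s)`, where
`lowerShear S = [[1, 0], [S, 1]]` and `contragredientDiag M = [[M⁻ᵀ, 0], [0, M]]`. Both factors are
symplectic (`σ t` is symmetric, `T_s` is unipotent), and conjugation by `contragredientDiag M`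
turns `lowerShear S` into `lowerShear (M S Mᵀ)`. The homomorphism property thus reduces to
`T_{s♯s'} = T_s T_{s'}` (multiplying upper triangular Toeplitz matrices convolves their
coefficient sequences), linearity of `σ`, and `σ (T_s v) = T_s σ(v) T_sᵀ`, which holds because
`σ(v) = (v e₁ᵀ + e₁ vᵀ) / 2` and `T_s e₁ = e₁`. For injectivity, both factors can be read off the
blocks of the product; then the `(1, 1)` entry of `a^{1/2} T_s` recovers `a`, and first rows
recover `s` and `t`.
-/

open Matrix Finset

def Tfin (d : ℕ) (s : Fin (d - 1) → ℝ) : Matrix (Fin d) (Fin d) ℝ :=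
  Matrix.of fun i j =>
    if h : (i : ℕ) < (j : ℕ) then
      s ⟨(j : ℕ) - (i : ℕ) - 1, by have := j.isLt; omega⟩
    else if (i : ℕ) = (j : ℕ) then 1 else 0

def sharpF (d : ℕ) (s s' : Fin (d - 1) → ℝ) : Fin (d - 1) → ℝ := fun p =>
  s p + s' p + ∑ j ∈ (Finset.range (p : ℕ)).attach,
    s' ⟨j.1, by have := Finset.mem_range.mp j.2; have := p.isLt; omega⟩ *
      s ⟨(p : ℕ) - 1 - j.1, by have := p.isLt; omega⟩

abbrev ToepShearletPos (d : ℕ) : Type :=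
  {a : ℝ // 0 < a} × (Fin (d - 1) → ℝ) × (Fin d → ℝ)

noncomputable def toepMul (d : ℕ) (x y : ToepShearletPos d) : ToepShearletPos d :=
  ⟨⟨x.1.1 * y.1.1, mul_pos x.1.2 y.1.2⟩, sharpF d x.2.1 y.2.1,
    x.2.2 + x.1.1 • (Tfin d x.2.1).mulVec y.2.2⟩

noncomputable def sigd (d : ℕ) (t : Fin d → ℝ) : Matrix (Fin d) (Fin d) ℝ :=
  Matrix.of fun i j =>
    if (i : ℕ) = 0 then (if (j : ℕ) = 0 then t j else (1 / 2) * t j)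
    else if (j : ℕ) = 0 then (1 / 2) * t i
    else 0

noncomputable def kappaT (d : ℕ) (x : ToepShearletPos d) :
    Matrix (Fin d ⊕ Fin d) (Fin d ⊕ Fin d) ℝ :=
  Matrix.fromBlocks (x.1.1 ^ (-(1 : ℝ) / 2) • ((Tfin d x.2.1)⁻¹)ᵀ) 0
    (x.1.1 ^ (-(1 : ℝ) / 2) • (sigd d x.2.2 * ((Tfin d x.2.1)⁻¹)ᵀ))
    (x.1.1 ^ ((1 : ℝ) / 2) • Tfin d x.2.1)

section BlockMatrices

variable {n R : Type*} [Fintype n] [DecidableEq n] [CommRing R]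

def lowerShear (S : Matrix n n R) : Matrix (n ⊕ n) (n ⊕ n) R := fromBlocks 1 0 S 1

noncomputable def contragredientDiag (M : Matrix n n R) : Matrix (n ⊕ n) (n ⊕ n) R :=
  fromBlocks (M⁻¹)ᵀ 0 0 M

lemma lowerShear_mul_lowerShear (S S' : Matrix n n R) :
    lowerShear S * lowerShear S' = lowerShear (S + S') := by
  simp [lowerShear, fromBlocks_multiply, add_comm]

lemma contragredientDiag_mul_contragredientDiag (M N : Matrix n n R) :
    contragredientDiag M * contragredientDiag N = contragredientDiag (M * N) := by
  simp [contragredientDiag, fromBlocks_multiply, Matrix.mul_inv_rev]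

lemma contragredientDiag_mul_lowerShear {M : Matrix n n R} (hM : IsUnit M.det)
    (S : Matrix n n R) :
    contragredientDiag M * lowerShear S = lowerShear (M * S * Mᵀ) * contragredientDiag M := by
  have hMt : Mᵀ * (M⁻¹)ᵀ = 1 := by rw [← transpose_mul, nonsing_inv_mul _ hM, transpose_one]
  simp [contragredientDiag, lowerShear, fromBlocks_multiply, Matrix.mul_assoc, hMt]

lemma lowerShear_mul_contragredientDiag (S M : Matrix n n R) :
    lowerShear S * contragredientDiag M = fromBlocks (M⁻¹)ᵀ 0 (S * (M⁻¹)ᵀ) M := by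
  simp [contragredientDiag, lowerShear, fromBlocks_multiply]

lemma lowerShear_mul_contragredientDiag_inj {S S' M M' : Matrix n n R} (hM : IsUnit M.det)
    (h : lowerShear S * contragredientDiag M = lowerShear S' * contragredientDiag M') :
    S = S' ∧ M = M' := by
  simp only [lowerShear_mul_contragredientDiag, fromBlocks_inj] at h
  obtain ⟨-, -, hS, rfl⟩ := h
  refine ⟨?_, rfl⟩
  have hMinvT : IsUnit (M⁻¹)ᵀ.det := by simpa using (isUnit_nonsing_inv_det M hM)
  simpa [Matrix.mul_assoc, mul_nonsing_inv _ hMinvT] using congrArg (· * ((M⁻¹)ᵀ)⁻¹) hS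

lemma lowerShear_mem_symplecticGroup {S : Matrix n n R} (hS : S.IsSymm) :
    lowerShear S ∈ symplecticGroup n R := by
  simp [lowerShear, SymplecticGroup.fromBlocks_mem_iff, hS.eq]

lemma contragredientDiag_mem_symplecticGroup {M : Matrix n n R} (hM : IsUnit M.det) :
    contragredientDiag M ∈ symplecticGroup n R := by
  simp [contragredientDiag, SymplecticGroup.fromBlocks_mem_iff, nonsing_inv_mul _ hM]

end BlockMatrices

section Toeplitz

variable {d : ℕ}

def toeplitzCoeff (s : Fin (d - 1) → ℝ) (k : ℕ) : ℝ :=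
  if k = 0 then 1 else if h : k - 1 < d - 1 then s ⟨k - 1, h⟩ else 0

lemma toeplitzCoeff_zero (s : Fin (d - 1) → ℝ) : toeplitzCoeff s 0 = 1 := rfl

lemma toeplitzCoeff_succ (s : Fin (d - 1) → ℝ) {k : ℕ} (hk : k < d - 1) :
    toeplitzCoeff s (k + 1) = s ⟨k, hk⟩ := by
  simp [toeplitzCoeff, hk]

lemma Tfin_apply (s : Fin (d - 1) → ℝ) (i j : Fin d) :
    Tfin d s i j = if (i : ℕ) ≤ j then toeplitzCoeff s (j - i) else 0 := by
  have hj := j.isLt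
  simp only [Tfin, toeplitzCoeff, of_apply]
  split_ifs <;> first | rfl | omega

lemma toeplitzCoeff_sharpF (s s' : Fin (d - 1) → ℝ) {n : ℕ} (hn : n < d) :
    toeplitzCoeff (sharpF d s s') n =
      ∑ k ∈ range (n + 1), toeplitzCoeff s k * toeplitzCoeff s' (n - k) := by
  rcases n with _ | p
  · simp [toeplitzCoeff_zero]
  have hp : p < d - 1 := by omega
  have hmiddle : ∑ j ∈ (range p).attach,
      s' ⟨j.1, by have := mem_range.mp j.2; omega⟩ * s ⟨p - 1 - j.1, by omega⟩ =
      ∑ k ∈ range p, toeplitzCoeff s (k + 1) * toeplitzCoeff s' (p - k) := by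
    rw [← sum_range_reflect, ← sum_attach (range p)]
    refine sum_congr rfl fun j _ => ?_
    have hj := mem_range.mp j.2
    rw [mul_comm, toeplitzCoeff_succ s (by omega), show p - (p - 1 - j.1) = j.1 + 1 by omega,
      toeplitzCoeff_succ s' (by omega)]
  rw [sum_range_succ, sum_range_succ', toeplitzCoeff_succ _ hp, Nat.sub_self, Nat.sub_zero,
    toeplitzCoeff_succ s hp, toeplitzCoeff_succ s' hp]
  simp only [sharpF, hmiddle, Nat.add_sub_add_right, toeplitzCoeff_zero]
  ring

lemma Tfin_sharpF (s s' : Fin (d - 1) → ℝ) :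
    Tfin d (sharpF d s s') = Tfin d s * Tfin d s' := by
  ext i j
  simp only [mul_apply, Tfin_apply]
  split_ifs with hij
  · have hsupport : ∀ m : ℕ,
        ((if (i : ℕ) ≤ m then toeplitzCoeff s (m - i) else 0) *
          if m ≤ (j : ℕ) then toeplitzCoeff s' (j - m) else 0) =
        if m ∈ Ico (i : ℕ) (j + 1) then toeplitzCoeff s (m - i) * toeplitzCoeff s' (j - m)
          else 0 := by
      intro m
      simp only [mem_Ico, Nat.lt_succ_iff]
      split_ifs <;> first | rfl | omega | simp
    have hIco : Ico (i : ℕ) (j + 1) ⊆ range d := fun m hm => by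
      have := j.isLt
      simp only [mem_Ico, mem_range] at hm ⊢
      omega
    rw [toeplitzCoeff_sharpF s s' (by omega),
      Fin.sum_univ_eq_sum_range (fun m => ((if (i : ℕ) ≤ m then toeplitzCoeff s (m - i) else 0) *
          if m ≤ (j : ℕ) then toeplitzCoeff s' (j - m) else 0)),
      sum_congr rfl fun m _ => hsupport m, sum_ite_mem, inter_eq_right.mpr hIco,
      sum_Ico_eq_sum_range, show (j : ℕ) + 1 - i = j - i + 1 by omega]
    refine sum_congr rfl fun k hk => ?_
    rw [Nat.add_sub_cancel_left, Nat.sub_add_eq, Nat.sub_sub]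
  · refine (sum_eq_zero fun m _ => ?_).symm
    split_ifs <;> first | omega | simp

lemma det_Tfin (s : Fin (d - 1) → ℝ) : (Tfin d s).det = 1 := by
  have hupper : (Tfin d s).IsUpperTriangular := fun i j hji => by
    rw [Tfin_apply, if_neg (by simpa using hji)]
  simp [det_of_isUpperTriangular hupper, Tfin_apply, toeplitzCoeff_zero]

lemma isUnit_det_Tfin (s : Fin (d - 1) → ℝ) : IsUnit (Tfin d s).det := by
  simp [det_Tfin]

lemma Tfin_injective : Function.Injective (Tfin d) := fun s s' h => funext fun p => by
  have hp := p.isLt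
  have hentry := congrFun₂ h ⟨0, by omega⟩ ⟨p + 1, by omega⟩
  simpa [Tfin_apply, toeplitzCoeff_succ _ hp] using hentry

def firstUnitVec (d : ℕ) : Fin d → ℝ := fun i => if (i : ℕ) = 0 then 1 else 0

lemma sigd_eq_vecMulVec (t : Fin d → ℝ) :
    sigd d t = (1 / 2 : ℝ) • (vecMulVec t (firstUnitVec d) + vecMulVec (firstUnitVec d) t) := by
  ext i j
  simp only [sigd, firstUnitVec, of_apply, Matrix.smul_apply, Matrix.add_apply, vecMulVec_apply,
    smul_eq_mul]
  by_cases hi : (i : ℕ) = 0 <;> by_cases hj : (j : ℕ) = 0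
  · obtain rfl : i = j := Fin.ext (by omega)
    simp [hi]; ring
  all_goals simp [hi, hj]

lemma sigd_isSymm (t : Fin d → ℝ) : (sigd d t).IsSymm := by
  rw [IsSymm, sigd_eq_vecMulVec, transpose_smul, transpose_add, transpose_vecMulVec,
    transpose_vecMulVec, add_comm]

lemma sigd_add_smul (t u : Fin d → ℝ) (c : ℝ) :
    sigd d (t + c • u) = sigd d t + c • sigd d u := by
  ext i j
  simp only [sigd, of_apply, Matrix.add_apply, Matrix.smul_apply, Pi.add_apply, Pi.smul_apply,
    smul_eq_mul]
  split_ifs <;> ring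

lemma sigd_injective : Function.Injective (sigd d) := fun t t' h => funext fun j => by
  have hrow := congrFun₂ h ⟨0, j.pos⟩ j
  by_cases hj : (j : ℕ) = 0 <;> simpa [sigd, hj] using hrow

lemma Tfin_mulVec_firstUnitVec (s : Fin (d - 1) → ℝ) :
    Tfin d s *ᵥ firstUnitVec d = firstUnitVec d := by
  ext i
  rw [mulVec, dotProduct, sum_eq_single ⟨0, i.pos⟩]
  · simp [firstUnitVec, Tfin_apply, toeplitzCoeff_zero]
  · intro b _ hb
    simp [firstUnitVec, Fin.ext_iff.not.mp hb]
  · simp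

lemma sigd_Tfin_mulVec (s : Fin (d - 1) → ℝ) (v : Fin d → ℝ) :
    sigd d (Tfin d s *ᵥ v) = Tfin d s * sigd d v * (Tfin d s)ᵀ := by
  rw [sigd_eq_vecMulVec, sigd_eq_vecMulVec, Matrix.mul_smul, Matrix.smul_mul, Matrix.mul_add,
    Matrix.add_mul, mul_vecMulVec, mul_vecMulVec, vecMulVec_mul, vecMulVec_mul, vecMul_transpose,
    vecMul_transpose, Tfin_mulVec_firstUnitVec]

end Toeplitz

section Kappa

variable {d : ℕ}

noncomputable def scaledToeplitz (x : ToepShearletPos d) : Matrix (Fin d) (Fin d) ℝ :=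
  x.1.1 ^ ((1 : ℝ) / 2) • Tfin d x.2.1

lemma isUnit_det_scaledToeplitz (x : ToepShearletPos d) : IsUnit (scaledToeplitz x).det := by
  rw [scaledToeplitz, det_smul, det_Tfin, mul_one]
  exact (Real.rpow_pos_of_pos x.1.2 _).ne'.isUnit.pow _

lemma kappaT_eq_lowerShear_mul (x : ToepShearletPos d) :
    kappaT d x = lowerShear (sigd d x.2.2) * contragredientDiag (scaledToeplitz x) := by
  have hinv : (scaledToeplitz x)⁻¹ = x.1.1 ^ (-(1 : ℝ) / 2) • (Tfin d x.2.1)⁻¹ := by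
    refine inv_eq_left_inv ?_
    rw [scaledToeplitz, smul_mul_smul_comm, nonsing_inv_mul _ (isUnit_det_Tfin _),
      ← Real.rpow_add x.1.2]
    norm_num
  rw [lowerShear_mul_contragredientDiag, hinv, transpose_smul, Matrix.mul_smul, kappaT,
    scaledToeplitz]

lemma scaledToeplitz_toepMul (x y : ToepShearletPos d) :
    scaledToeplitz (toepMul d x y) = scaledToeplitz x * scaledToeplitz y := by
  rw [scaledToeplitz, toepMul, Tfin_sharpF, Real.mul_rpow x.1.2.le y.1.2.le,
    scaledToeplitz, scaledToeplitz, smul_mul_smul_comm]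

lemma sigd_toepMul (x y : ToepShearletPos d) :
    sigd d (toepMul d x y).2.2 =
      sigd d x.2.2 + scaledToeplitz x * sigd d y.2.2 * (scaledToeplitz x)ᵀ := by
  have hsq : x.1.1 ^ ((1 : ℝ) / 2) * x.1.1 ^ ((1 : ℝ) / 2) = x.1.1 := by
    rw [← Real.rpow_add x.1.2]; norm_num
  rw [toepMul, sigd_add_smul, sigd_Tfin_mulVec, scaledToeplitz, transpose_smul, Matrix.smul_mul,
    Matrix.mul_smul, Matrix.smul_mul, smul_smul, hsq]

lemma scaledToeplitz_inj (hd : 1 ≤ d) {x y : ToepShearletPos d}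
    (h : scaledToeplitz x = scaledToeplitz y) : x.1 = y.1 ∧ x.2.1 = y.2.1 := by
  have hroot : x.1.1 ^ ((1 : ℝ) / 2) = y.1.1 ^ ((1 : ℝ) / 2) := by
    simpa [scaledToeplitz, Tfin_apply, toeplitzCoeff_zero] using congrFun₂ h ⟨0, hd⟩ ⟨0, hd⟩
  have ha : x.1 = y.1 :=
    Subtype.ext ((Real.rpow_left_inj x.1.2.le y.1.2.le (by norm_num)).mp hroot)
  rw [scaledToeplitz, scaledToeplitz, hroot] at h
  exact ⟨ha, Tfin_injective (smul_right_injective _ (Real.rpow_pos_of_pos y.1.2 _).ne' h)⟩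

lemma kappaT_injective (hd : 1 ≤ d) : Function.Injective (kappaT d) := fun x y h => by
  rw [kappaT_eq_lowerShear_mul, kappaT_eq_lowerShear_mul] at h
  obtain ⟨hσ, hM⟩ := lowerShear_mul_contragredientDiag_inj (isUnit_det_scaledToeplitz x) h
  obtain ⟨ha, hs⟩ := scaledToeplitz_inj hd hM
  exact Prod.ext ha (Prod.ext hs (sigd_injective hσ))

lemma kappaT_toepMul (x y : ToepShearletPos d) :
    kappaT d (toepMul d x y) = kappaT d x * kappaT d y := by
  calc kappaT d (toepMul d x y)
      = lowerShear (sigd d x.2.2) *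
          lowerShear (scaledToeplitz x * sigd d y.2.2 * (scaledToeplitz x)ᵀ) *
          (contragredientDiag (scaledToeplitz x) * contragredientDiag (scaledToeplitz y)) := by
        rw [kappaT_eq_lowerShear_mul, sigd_toepMul, scaledToeplitz_toepMul,
          lowerShear_mul_lowerShear, contragredientDiag_mul_contragredientDiag]
    _ = lowerShear (sigd d x.2.2) *
          (contragredientDiag (scaledToeplitz x) * lowerShear (sigd d y.2.2)) *
          contragredientDiag (scaledToeplitz y) := by
        rw [contragredientDiag_mul_lowerShear (isUnit_det_scaledToeplitz x)]
        simp only [Matrix.mul_assoc]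
    _ = kappaT d x * kappaT d y := by
        simp only [kappaT_eq_lowerShear_mul, Matrix.mul_assoc]

lemma kappaT_mem_symplecticGroup (x : ToepShearletPos d) :
    kappaT d x ∈ symplecticGroup (Fin d) ℝ := by
  rw [kappaT_eq_lowerShear_mul]
  exact mul_mem (lowerShear_mem_symplecticGroup (sigd_isSymm _))
    (contragredientDiag_mem_symplecticGroup (isUnit_det_scaledToeplitz x))

end Kappa

/-- `κ_T⁺` is an injective group homomorphism from the connected Toeplitz
shearlet group into the symplectic group `Sp(d,ℝ)`. -/
theorem kappaT_injective_hom (d : ℕ) (hd : 1 ≤ d) :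
    Function.Injective (kappaT d) ∧
    (∀ x y : ToepShearletPos d, kappaT d (toepMul d x y) = kappaT d x * kappaT d y) ∧
    (∀ x : ToepShearletPos d, kappaT d x ∈ Matrix.symplecticGroup (Fin d) ℝ) := by
  exact ⟨kappaT_injective hd, kappaT_toepMul, kappaT_mem_symplecticGroup⟩
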